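/- Let R be a compactly supported absolutely continuous probability measure on R^d with bounded density. Then for each fixed i, the map z -> R(C_i(z) \ C_i(z')) is locally Lipschitz: for every U > 0 there exists a constant L such that R(C_i(z) \ C_i(z')) <= L * ||z - z'|| whenever ||z||, ||z'|| <= U, where C_i(z) is the Laguerre cell determined by distinct points x_1,...,x_N. -/

import Mathlib

/-! A point of `C_i(z) \ C_i(z')` satisfies some constraint `j ≠ i` of `C_i(z)` but violates the
same constraint of `C_i(z')`, so it lies in a slab `{c_j(z) ≤ ⟪x_i - x_j, y⟫ ≤ c_j(z')}`, where
`c_j(z) = (‖x_i‖² - ‖x_j‖²)/2 - z_i + z_j`; its width is at most `2‖z - z'‖ / ‖x_i - x_j‖`.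
Inside a ball of radius `r` containing the support of `ρ`, such a slab fits in a box with one
side of that width and the others of length `2r`, and `ρ ≤ M` turns the resulting volume bound
into a bound on `R`. -/

open RealInnerProductSpace MeasureTheory

/-- Laguerre cell C_i(z) -/
noncomputable def Lcell {d N : ℕ} (x : Fin N → EuclideanSpace ℝ (Fin d))
    (z : Fin N → ℝ) (i : Fin N) : Set (EuclideanSpace ℝ (Fin d)) :=
  {y | ∀ j, j ≠ i → (‖x i‖ ^ 2 - ‖x j‖ ^ 2) / 2 - z i + z j ≤ ⟪x i - x j, y⟫}

open Module Set
open scoped ENNReal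

section Slab

variable {E : Type*} [NormedAddCommGroup E] [InnerProductSpace ℝ E] [FiniteDimensional ℝ E]

theorem exists_orthonormalBasis_apply_eq {u : E} (hu : ‖u‖ = 1) (k : Fin (finrank ℝ E)) :
    ∃ B : OrthonormalBasis (Fin (finrank ℝ E)) ℝ E, B k = u := by
  have hon : Orthonormal ℝ (({k} : Set (Fin (finrank ℝ E))).domRestrict fun _ => u) :=
    orthonormal_subsingleton_iff.mpr fun _ => hu
  obtain ⟨B, hB⟩ := hon.exists_orthonormalBasis_extension_of_card_eq (Fintype.card_fin _).symm
  exact ⟨B, hB k rfl⟩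

variable [MeasurableSpace E] [BorelSpace E]

theorem volume_closedBall_inter_slab_le {v : E} (hv : v ≠ 0) (r a b : ℝ) :
    volume {y : E | ‖y‖ ≤ r ∧ a ≤ ⟪v, y⟫ ∧ ⟪v, y⟫ ≤ b} ≤
      ENNReal.ofReal ((b - a) / ‖v‖) * ENNReal.ofReal (2 * r) ^ (finrank ℝ E - 1) := by
  have : Nontrivial E := ⟨v, 0, hv⟩
  let k₀ : Fin (finrank ℝ E) := ⟨0, finrank_pos⟩
  obtain ⟨B, hB⟩ := exists_orthonormalBasis_apply_eq (norm_smul_inv_norm (𝕜 := ℝ) hv) k₀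
  let I : Fin (finrank ℝ E) → Set ℝ :=
    Function.update (fun _ => Icc (-r) r) k₀ (Icc (a / ‖v‖) (b / ‖v‖))
  have hsub : {y : E | ‖y‖ ≤ r ∧ a ≤ ⟪v, y⟫ ∧ ⟪v, y⟫ ≤ b} ⊆
      (fun y => WithLp.ofLp (B.repr y)) ⁻¹' univ.pi I := by
    rintro y ⟨hy, ha, hb⟩ k -
    by_cases hk : k = k₀
    · have hyk : B.repr y k = ⟪v, y⟫ / ‖v‖ := by
        rw [B.repr_apply_apply, hk, hB]
        simp [real_inner_smul_left, inv_mul_eq_div]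
      have hv' := norm_pos_iff.mpr hv
      simp only [I, hk, Function.update_self, hyk, mem_Icc]
      exact ⟨div_le_div_of_nonneg_right ha hv'.le, div_le_div_of_nonneg_right hb hv'.le⟩
    · have habs : |B.repr y k| ≤ r := by
        rw [B.repr_apply_apply]
        calc |⟪B k, y⟫| ≤ ‖B k‖ * ‖y‖ := abs_real_inner_le_norm _ _
          _ ≤ r := by rwa [B.norm_eq_one, one_mul]
      simp only [I, Function.update_of_ne hk]
      exact abs_le.mp habs
  calc _ ≤ volume ((fun y => WithLp.ofLp (B.repr y)) ⁻¹' univ.pi I) := measure_mono hsub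
    _ ≤ volume (univ.pi I) :=
      ((PiLp.volume_preserving_ofLp _).comp B.measurePreserving_repr).measure_preimage_le _
    _ = ∏ k, volume (I k) := volume_pi_pi I
    _ = _ := by
      have hI : ∀ k ∈ ({k₀}ᶜ : Finset _), volume (I k) = volume (Icc (-r) r) :=
        fun k hk => congrArg volume (Function.update_of_ne (by simpa using hk) _ _)
      rw [Fintype.prod_eq_mul_prod_compl k₀, Finset.prod_congr rfl hI]
      simp [I, Real.volume_Icc, sub_div, two_mul, Finset.card_compl]

end Slab

theorem withDensity_apply_le_mul_measure_inter {α : Type*} [MeasurableSpace α] {μ : Measure α}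
    [SFinite μ] {f : α → ℝ≥0∞} {s : Set α} (hs : MeasurableSet s) {C : ℝ≥0∞}
    (hf : ∀ y, f y ≤ s.indicator (fun _ => C) y) (t : Set α) :
    μ.withDensity f t ≤ C * μ (t ∩ s) := by
  rw [withDensity_apply' f t, inter_comm, ← Measure.restrict_apply hs,
    ← lintegral_indicator_const hs]
  exact lintegral_mono hf

section Laguerre

variable {d N : ℕ} (x : Fin N → EuclideanSpace ℝ (Fin d)) (z z' : Fin N → ℝ) (i : Fin N)

theorem Lcell_diff_inter_closedBall_subset (r : ℝ) :
    (Lcell x z i \ Lcell x z' i) ∩ Metric.closedBall 0 r ⊆ ⋃ j ∈ Finset.univ.erase i,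
      {y | ‖y‖ ≤ r ∧ (‖x i‖ ^ 2 - ‖x j‖ ^ 2) / 2 - z i + z j ≤ ⟪x i - x j, y⟫ ∧
        ⟪x i - x j, y⟫ ≤ (‖x i‖ ^ 2 - ‖x j‖ ^ 2) / 2 - z' i + z' j} := by
  rintro y ⟨⟨hy, hy'⟩, hyr⟩
  obtain ⟨j, hji, hj⟩ : ∃ j, j ≠ i ∧ ⟪x i - x j, y⟫ < (‖x i‖ ^ 2 - ‖x j‖ ^ 2) / 2 - z' i + z' j := by
    simpa [Lcell] using hy'
  exact mem_biUnion (Finset.mem_erase.mpr ⟨hji, Finset.mem_univ j⟩)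
    ⟨mem_closedBall_zero_iff.mp hyr, hy j hji, hj.le⟩

theorem volume_Lcell_diff_inter_closedBall_le (hx : Function.Injective x) (r : ℝ) :
    volume ((Lcell x z i \ Lcell x z' i) ∩ Metric.closedBall 0 r) ≤
      (∑ j ∈ Finset.univ.erase i,
        ENNReal.ofReal (2 / ‖x i - x j‖) * ENNReal.ofReal (2 * r) ^ (d - 1)) *
        ENNReal.ofReal ‖z - z'‖ := by
  refine (measure_mono (Lcell_diff_inter_closedBall_subset x z z' i r)).trans <|
    (measure_biUnion_finset_le _ _).trans ?_
  rw [Finset.sum_mul]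
  refine Finset.sum_le_sum fun j hj => ?_
  have hxij : x i - x j ≠ 0 := sub_ne_zero.mpr (hx.ne (Finset.ne_of_mem_erase hj).symm)
  have hoffset : z i - z' i + (z' j - z j) ≤ 2 * ‖z - z'‖ := by
    have hi := (abs_le.mp ((Real.norm_eq_abs _).symm.trans_le (norm_le_pi_norm (z - z') i))).2
    have hj := (abs_le.mp ((Real.norm_eq_abs _).symm.trans_le (norm_le_pi_norm (z - z') j))).1
    simp only [Pi.sub_apply] at hi hj
    linarith
  refine (volume_closedBall_inter_slab_le hxij r _ _).trans ?_
  rw [finrank_euclideanSpace_fin, mul_right_comm, ← ENNReal.ofReal_mul (by positivity)]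
  gcongr
  rw [div_mul_eq_mul_div, mul_comm]
  gcongr
  linarith

end Laguerre

theorem laguerre_cell_measure_locally_lipschitz_general (d N : ℕ)
    (x : Fin N → EuclideanSpace ℝ (Fin d)) (hx : Function.Injective x)
    (ρ : EuclideanSpace ℝ (Fin d) → ℝ) (M : ℝ) (hρM : ∀ y, ρ y ≤ M)
    (Y : Set (EuclideanSpace ℝ (Fin d))) (hY : IsCompact Y) (hsupp : ∀ y ∉ Y, ρ y = 0)
    (R : Measure (EuclideanSpace ℝ (Fin d)))
    (hR : R = volume.withDensity (fun y => ENNReal.ofReal (ρ y)))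
    (i : Fin N) (U : ℝ) :
    ∃ L : ℝ, ∀ z z' : Fin N → ℝ, ‖z‖ ≤ U → ‖z'‖ ≤ U →
      (R (Lcell x z i \ Lcell x z' i)).toReal ≤ L * ‖z - z'‖ := by
  obtain ⟨r, hYr⟩ := hY.isBounded.subset_closedBall 0
  set K := ∑ j ∈ Finset.univ.erase i,
    ENNReal.ofReal (2 / ‖x i - x j‖) * ENNReal.ofReal (2 * r) ^ (d - 1)
  have hK : K ≠ ⊤ := ENNReal.sum_ne_top.mpr fun j _ => by finiteness
  refine ⟨(ENNReal.ofReal M * K).toReal, fun z z' _ _ => ?_⟩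
  have hρ : ∀ y, ENNReal.ofReal (ρ y) ≤
      (Metric.closedBall 0 r).indicator (fun _ => ENNReal.ofReal M) y := by
    intro y
    by_cases hy : y ∈ Y
    · rw [indicator_of_mem (hYr hy)]
      exact ENNReal.ofReal_le_ofReal (hρM y)
    · simp [hsupp y hy]
  have hbound : R (Lcell x z i \ Lcell x z' i) ≤ ENNReal.ofReal M * K * ENNReal.ofReal ‖z - z'‖ :=
    calc _ ≤ ENNReal.ofReal M * volume ((Lcell x z i \ Lcell x z' i) ∩ Metric.closedBall 0 r) :=
          hR ▸ withDensity_apply_le_mul_measure_inter Metric.isClosed_closedBall.measurableSet hρ _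
      _ ≤ ENNReal.ofReal M * (K * ENNReal.ofReal ‖z - z'‖) := by
          gcongr; exact volume_Lcell_diff_inter_closedBall_le x z z' i hx r
      _ = _ := (mul_assoc _ _ _).symm
  calc _ ≤ (ENNReal.ofReal M * K * ENNReal.ofReal ‖z - z'‖).toReal :=
        ENNReal.toReal_mono (by finiteness) hbound
    _ = _ := by rw [ENNReal.toReal_mul, ENNReal.toReal_ofReal (norm_nonneg _)]

/-- for a compactly supported absolutely continuous probability measure R with
bounded density, z ↦ R(C_i(z) \ C_i(z')) is locally Lipschitz: on each ball of radius U there is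
a constant L with R(C_i(z) \ C_i(z')) ≤ L ‖z - z'‖. -/
theorem laguerre_cell_measure_locally_lipschitz (d N : ℕ) (hN : 2 ≤ N)
    (x : Fin N → EuclideanSpace ℝ (Fin d)) (hx : Function.Injective x)
    (ρ : EuclideanSpace ℝ (Fin d) → ℝ) (M : ℝ) (hρM : ∀ y, ρ y ≤ M) (hρ0 : ∀ y, 0 ≤ ρ y)
    (Y : Set (EuclideanSpace ℝ (Fin d))) (hY : IsCompact Y) (hsupp : ∀ y ∉ Y, ρ y = 0)
    (R : Measure (EuclideanSpace ℝ (Fin d))) [IsProbabilityMeasure R]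
    (hR : R = volume.withDensity (fun y => ENNReal.ofReal (ρ y)))
    (i : Fin N) (U : ℝ) (hU : 0 < U) :
    ∃ L : ℝ, ∀ z z' : Fin N → ℝ, ‖z‖ ≤ U → ‖z'‖ ≤ U →
      (R (Lcell x z i \ Lcell x z' i)).toReal ≤ L * ‖z - z'‖ :=
  laguerre_cell_measure_locally_lipschitz_general d N x hx ρ M hρM Y hY hsupp R hR i U
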